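/- Let A ∈ ℝ^{m×n}, let Ḡ ∈ ℝ^{m×k} and H̄ ∈ ℝ^{n×ℓ} be full-column-rank matrices whose columns are unit vectors, generating the polyhedral cones P = {Ḡx : x ≥ 0} ⊆ ℝ^m and contained in Q ⊇ {H̄y : y ≥ 0}; set A_x = H̄⁺AᵀḠ, A_y = Ḡ⁺AH̄, M = [[0, A_x],[A_y, 0]], and λ = −√(ρ(A_y A_x)) with λ ≠ 0. If z̄ = (ȳᵀ, x̄ᵀ)ᵀ ≥ 0 is a nonzero vector with M z̄ = λ z̄, where x̄ ∈ ℝ^k and ȳ ∈ ℝ^ℓ, then x̄ ≠ 0, ȳ ≠ 0, ‖Ḡ x̄‖ = ‖H̄ ȳ‖, and the vectors u = Ḡx̄/‖Ḡx̄‖ and v = H̄ȳ/‖H̄ȳ‖ satisfy u ∈ {Ḡx : x ≥ 0}, v ∈ {H̄y : y ≥ 0}, ‖u‖ = ‖v‖ = 1 and ⟨u, Av⟩ = λ. -/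

import Mathlib

open Matrix

/-- Euclidean norm of a vector. -/
noncomputable def vnorm {α : Type*} [Fintype α] (v : α → ℝ) : ℝ := Real.sqrt (v ⬝ᵥ v)

/-- The polyhedral cone generated by the columns of `G`. -/
def coneOf {m p : ℕ} (G : Matrix (Fin m) (Fin p) ℝ) : Set (Fin m → ℝ) :=
  {u | ∃ x : Fin p → ℝ, (∀ i, 0 ≤ x i) ∧ u = G.mulVec x}

/-- Pseudoinverse of a full-column-rank matrix: `N⁺ = (NᵀN)⁻¹Nᵀ`. -/
noncomputable def pinv {α β : Type*} [Fintype α] [Fintype β] [DecidableEq β]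
    (N : Matrix α β ℝ) : Matrix β α ℝ :=
  (Nᵀ * N)⁻¹ * Nᵀ

/-- Spectral radius of a real square matrix: the largest modulus of its (complex)
eigenvalues. -/
noncomputable def specRad {α : Type*} [Fintype α] [DecidableEq α]
    (C : Matrix α α ℝ) : ℝ :=
  sSup {r : ℝ | ∃ μ : ℂ, μ ∈ spectrum ℂ (C.map Complex.ofReal) ∧ r = ‖μ‖}

/-!
Write `p = Ḡx̄` and `q = H̄ȳ`. The two block rows of the eigen-equation read
`Ḡ⁺(AH̄)ȳ = λx̄` and `H̄⁺(AᵀḠ)x̄ = λȳ`; multiplying the first by `ḠᵀḠ` (which undoes `Ḡ⁺`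
up to `Ḡᵀ`) and pairing with `x̄` gives `⟨p, Aq⟩ = λ‖p‖²`, and symmetrically
`⟨q, Aᵀp⟩ = λ‖q‖²`. The two left-hand sides coincide, so `λ ≠ 0` forces `‖p‖ = ‖q‖`, and
normalizing both vectors by this common norm leaves `⟨u, Av⟩ = λ`.
-/

theorem Matrix.isUnit_det_of_rank_eq_card {n K : Type*} [Fintype n] [DecidableEq n] [Field K]
    (M : Matrix n n K) (h : M.rank = Fintype.card n) : IsUnit M.det := by
  rw [isUnit_iff_ne_zero]
  intro hdet
  obtain ⟨v, hv0, hv⟩ := Matrix.exists_mulVec_eq_zero_iff.mpr hdet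
  have hsurj : Function.Surjective M.mulVecLin := by
    rw [← LinearMap.range_eq_top]
    apply Submodule.eq_top_of_finrank_eq
    rw [← Matrix.rank, h, Module.finrank_fintype_fun_eq_card]
  have hinj : Function.Injective M.mulVecLin := LinearMap.injective_iff_surjective.mpr hsurj
  exact hv0 (hinj (by simpa using hv))

section Pseudoinverse

variable {ι κ ρ : Type*} [Fintype ι] [Fintype κ] [Fintype ρ] [DecidableEq κ]
  {N : Matrix ι κ ℝ}

theorem isUnit_det_transpose_mul_self (hN : N.rank = Fintype.card κ) : IsUnit (Nᵀ * N).det :=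
  (Nᵀ * N).isUnit_det_of_rank_eq_card (by rw [rank_transpose_mul_self, hN])

theorem pinv_mul_self (hN : N.rank = Fintype.card κ) : pinv N * N = 1 := by
  rw [pinv, Matrix.mul_assoc, nonsing_inv_mul _ (isUnit_det_transpose_mul_self hN)]

theorem transpose_mul_self_mul_pinv (hN : N.rank = Fintype.card κ) :
    Nᵀ * N * pinv N = Nᵀ := by
  rw [pinv, ← Matrix.mul_assoc, mul_nonsing_inv _ (isUnit_det_transpose_mul_self hN),
    Matrix.one_mul]

theorem mulVec_ne_zero_of_rank_eq_card (hN : N.rank = Fintype.card κ) {x : κ → ℝ}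
    (hx : x ≠ 0) : N *ᵥ x ≠ 0 := by
  intro h
  apply hx
  simpa [mulVec_mulVec, pinv_mul_self hN] using congrArg (pinv N *ᵥ ·) h

theorem mulVec_dotProduct_eq_of_pinv_mul_mulVec_eq_smul (hN : N.rank = Fintype.card κ)
    {B : Matrix ι ρ ℝ} {x : κ → ℝ} {y : ρ → ℝ} {lam : ℝ} (h : (pinv N * B) *ᵥ y = lam • x) :
    (N *ᵥ x) ⬝ᵥ (B *ᵥ y) = lam * ((N *ᵥ x) ⬝ᵥ (N *ᵥ x)) := by
  calc (N *ᵥ x) ⬝ᵥ (B *ᵥ y) = x ⬝ᵥ ((Nᵀ * N * pinv N * B) *ᵥ y) := by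
        rw [transpose_mul_self_mul_pinv hN, ← mulVec_mulVec, dotProduct_transpose_mulVec,
          dotProduct_comm]
    _ = x ⬝ᵥ (Nᵀ *ᵥ (N *ᵥ (lam • x))) := by
        rw [Matrix.mul_assoc, ← mulVec_mulVec, h, mulVec_mulVec]
    _ = lam * ((N *ᵥ x) ⬝ᵥ (N *ᵥ x)) := by
        rw [dotProduct_transpose_mulVec, mulVec_smul, smul_dotProduct, smul_eq_mul]

end Pseudoinverse

theorem fromBlocks_zero_mulVec_sumElim_eq_smul_iff {R ι κ : Type*} [Fintype ι] [Fintype κ]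
    [Semiring R] {B : Matrix ι κ R} {C : Matrix κ ι R} {y : ι → R} {x : κ → R} {lam : R} :
    fromBlocks 0 B C 0 *ᵥ Sum.elim y x = lam • Sum.elim y x ↔
      B *ᵥ x = lam • y ∧ C *ᵥ y = lam • x := by
  have hsmul : lam • Sum.elim y x = Sum.elim (lam • y) (lam • x) := by
    ext (i | i) <;> rfl
  rw [fromBlocks_mulVec, hsmul]
  simp only [zero_mulVec, zero_add, add_zero, Sum.elim_comp_inl, Sum.elim_comp_inr]
  exact Sum.elim_eq_iff

theorem ne_zero_and_ne_zero_of_mulVec_eq_smul {K ι κ : Type*} [Fintype ι] [Fintype κ] [Field K]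
    {B : Matrix ι κ K} {C : Matrix κ ι K} {y : ι → K} {x : κ → K} {lam : K} (hlam : lam ≠ 0)
    (hy : B *ᵥ x = lam • y) (hx : C *ᵥ y = lam • x) (hyx : Sum.elim y x ≠ 0) :
    x ≠ 0 ∧ y ≠ 0 := by
  have hy0_of_hx0 : x = 0 → y = 0 := fun h0 => by
    simpa [h0, hlam, eq_comm] using hy
  have hx0_of_hy0 : y = 0 → x = 0 := fun h0 => by
    simpa [h0, hlam, eq_comm] using hx
  refine ⟨fun h0 => hyx ?_, fun h0 => hyx ?_⟩
  · rw [h0, hy0_of_hx0 h0, Sum.elim_zero_zero]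
  · rw [h0, hx0_of_hy0 h0, Sum.elim_zero_zero]

section Norm

variable {α : Type*} [Fintype α]

theorem vnorm_nonneg (v : α → ℝ) : 0 ≤ vnorm v := Real.sqrt_nonneg _

theorem vnorm_mul_self (v : α → ℝ) : vnorm v * vnorm v = v ⬝ᵥ v :=
  Real.mul_self_sqrt (Finset.sum_nonneg fun i _ => mul_self_nonneg (v i))

theorem vnorm_ne_zero {v : α → ℝ} (hv : v ≠ 0) : vnorm v ≠ 0 := by
  intro h
  apply hv
  rw [← dotProduct_self_eq_zero, ← vnorm_mul_self, h, mul_zero]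

theorem vnorm_smul (c : ℝ) (v : α → ℝ) : vnorm (c • v) = |c| * vnorm v := by
  rw [vnorm, vnorm, smul_dotProduct, dotProduct_smul, smul_eq_mul, smul_eq_mul, ← mul_assoc,
    Real.sqrt_mul (mul_self_nonneg c), Real.sqrt_mul_self_eq_abs]

theorem vnorm_inv_smul_self {v : α → ℝ} (hv : v ≠ 0) : vnorm ((vnorm v)⁻¹ • v) = 1 := by
  rw [vnorm_smul, abs_of_nonneg (inv_nonneg.mpr (vnorm_nonneg v)),
    inv_mul_cancel₀ (vnorm_ne_zero hv)]

end Norm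

section Cone

variable {m p : ℕ} {G : Matrix (Fin m) (Fin p) ℝ}

theorem mulVec_mem_coneOf {x : Fin p → ℝ} (hx : ∀ i, 0 ≤ x i) : G *ᵥ x ∈ coneOf G :=
  ⟨x, hx, rfl⟩

theorem smul_mem_coneOf {c : ℝ} (hc : 0 ≤ c) {u : Fin m → ℝ} (hu : u ∈ coneOf G) :
    c • u ∈ coneOf G := by
  obtain ⟨x, hx, rfl⟩ := hu
  exact ⟨c • x, fun i => mul_nonneg hc (hx i), (mulVec_smul G c x).symm⟩

end Cone

theorem vnorm_eq_and_normalized_dotProduct_eq {m n : Type*} [Fintype m] [Fintype n]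
    {A : Matrix m n ℝ} {p : m → ℝ} {q : n → ℝ} {lam : ℝ} (hlam : lam ≠ 0) (hp : p ≠ 0)
    (hpq : p ⬝ᵥ (A *ᵥ q) = lam * (p ⬝ᵥ p)) (hqp : q ⬝ᵥ (Aᵀ *ᵥ p) = lam * (q ⬝ᵥ q)) :
    vnorm p = vnorm q ∧ ((vnorm p)⁻¹ • p) ⬝ᵥ (A *ᵥ ((vnorm q)⁻¹ • q)) = lam := by
  have hsq : p ⬝ᵥ p = q ⬝ᵥ q := by
    refine mul_left_cancel₀ hlam ?_
    rw [← hpq, ← hqp, dotProduct_transpose_mulVec]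
  have hnorm : vnorm p = vnorm q := congrArg Real.sqrt hsq
  refine ⟨hnorm, ?_⟩
  rw [← hnorm, mulVec_smul, smul_dotProduct, dotProduct_smul, hpq, ← vnorm_mul_self,
    smul_eq_mul, smul_eq_mul]
  field_simp [vnorm_ne_zero hp]

theorem stmt14_general {m n k l : ℕ} (A : Matrix (Fin m) (Fin n) ℝ)
    (Gb : Matrix (Fin m) (Fin k) ℝ) (Hb : Matrix (Fin n) (Fin l) ℝ)
    (hGrank : Gb.rank = k) (hHrank : Hb.rank = l)
    (lam : ℝ)
    (hlamne : lam ≠ 0)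
    (xb : Fin k → ℝ) (yb : Fin l → ℝ)
    (hnn : ∀ i, 0 ≤ Sum.elim yb xb i)
    (hnz : Sum.elim yb xb ≠ 0)
    (heig : (Matrix.fromBlocks 0 (pinv Hb * Aᵀ * Gb) (pinv Gb * A * Hb) 0).mulVec
        (Sum.elim yb xb) = lam • Sum.elim yb xb) :
    xb ≠ 0 ∧ yb ≠ 0 ∧
    vnorm (Gb.mulVec xb) = vnorm (Hb.mulVec yb) ∧
    ((vnorm (Gb.mulVec xb))⁻¹ • Gb.mulVec xb) ∈ coneOf Gb ∧
    ((vnorm (Hb.mulVec yb))⁻¹ • Hb.mulVec yb) ∈ coneOf Hb ∧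
    vnorm ((vnorm (Gb.mulVec xb))⁻¹ • Gb.mulVec xb) = 1 ∧
    vnorm ((vnorm (Hb.mulVec yb))⁻¹ • Hb.mulVec yb) = 1 ∧
    ((vnorm (Gb.mulVec xb))⁻¹ • Gb.mulVec xb) ⬝ᵥ
        A.mulVec ((vnorm (Hb.mulVec yb))⁻¹ • Hb.mulVec yb) = lam := by
  have hG : Gb.rank = Fintype.card (Fin k) := by rwa [Fintype.card_fin]
  have hH : Hb.rank = Fintype.card (Fin l) := by rwa [Fintype.card_fin]
  obtain ⟨hy, hx⟩ := fromBlocks_zero_mulVec_sumElim_eq_smul_iff.mp heig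
  obtain ⟨hxb, hyb⟩ := ne_zero_and_ne_zero_of_mulVec_eq_smul hlamne hy hx hnz
  rw [Matrix.mul_assoc] at hx hy
  have hpq := mulVec_dotProduct_eq_of_pinv_mul_mulVec_eq_smul hG hx
  have hqp := mulVec_dotProduct_eq_of_pinv_mul_mulVec_eq_smul hH hy
  rw [← mulVec_mulVec] at hpq hqp
  have hGx := mulVec_ne_zero_of_rank_eq_card hG hxb
  obtain ⟨hnorm, hval⟩ := vnorm_eq_and_normalized_dotProduct_eq hlamne hGx hpq hqp
  exact ⟨hxb, hyb, hnorm,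
    smul_mem_coneOf (inv_nonneg.mpr (vnorm_nonneg _)) (mulVec_mem_coneOf fun i => hnn (.inr i)),
    smul_mem_coneOf (inv_nonneg.mpr (vnorm_nonneg _)) (mulVec_mem_coneOf fun i => hnn (.inl i)),
    vnorm_inv_smul_self hGx, vnorm_inv_smul_self (mulVec_ne_zero_of_rank_eq_card hH hyb), hval⟩

/-- If `z̄ = (ȳᵀ, x̄ᵀ)ᵀ ≥ 0` is a nonzero eigenvector of `M = [[0,A_x],[A_y,0]]` for the
eigenvalue `λ = −√ρ(A_y A_x) ≠ 0`, then `x̄ ≠ 0`, `ȳ ≠ 0`, `‖Ḡx̄‖ = ‖H̄ȳ‖`, and the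
normalized vectors `u = Ḡx̄/‖Ḡx̄‖`, `v = H̄ȳ/‖H̄ȳ‖` form a feasible pair of `SV(A,P,Q)`
with `⟨u, Av⟩ = λ`. -/
theorem stmt14 {m n k l : ℕ} (A : Matrix (Fin m) (Fin n) ℝ)
    (Gb : Matrix (Fin m) (Fin k) ℝ) (Hb : Matrix (Fin n) (Fin l) ℝ)
    (hGcols : ∀ j, vnorm (fun i => Gb i j) = 1) (hHcols : ∀ j, vnorm (fun i => Hb i j) = 1)
    (hGrank : Gb.rank = k) (hHrank : Hb.rank = l)
    (lam : ℝ) (hlam : lam = -Real.sqrt (specRad (pinv Gb * A * Hb * (pinv Hb * Aᵀ * Gb))))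
    (hlamne : lam ≠ 0)
    (xb : Fin k → ℝ) (yb : Fin l → ℝ)
    (hnn : ∀ i, 0 ≤ Sum.elim yb xb i)
    (hnz : Sum.elim yb xb ≠ 0)
    (heig : (Matrix.fromBlocks 0 (pinv Hb * Aᵀ * Gb) (pinv Gb * A * Hb) 0).mulVec
        (Sum.elim yb xb) = lam • Sum.elim yb xb) :
    xb ≠ 0 ∧ yb ≠ 0 ∧
    vnorm (Gb.mulVec xb) = vnorm (Hb.mulVec yb) ∧
    ((vnorm (Gb.mulVec xb))⁻¹ • Gb.mulVec xb) ∈ coneOf Gb ∧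
    ((vnorm (Hb.mulVec yb))⁻¹ • Hb.mulVec yb) ∈ coneOf Hb ∧
    vnorm ((vnorm (Gb.mulVec xb))⁻¹ • Gb.mulVec xb) = 1 ∧
    vnorm ((vnorm (Hb.mulVec yb))⁻¹ • Hb.mulVec yb) = 1 ∧
    ((vnorm (Gb.mulVec xb))⁻¹ • Gb.mulVec xb) ⬝ᵥ
        A.mulVec ((vnorm (Hb.mulVec yb))⁻¹ • Hb.mulVec yb) = lam :=
  stmt14_general A Gb Hb hGrank hHrank lam hlamne xb yb hnn hnz heig
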